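/- arXiv:1505.06422 — 2 statements merged into one kernel-verified Lean document; each statement's English description precedes it below -/
import Mathlib

section
/- Let B_{ij} ∈ M(d,ℂ) for i,j = 1,…,n be matrices such that every B_{ij} is normal and any two of them commute, and let T = ∑_{i,j=1}^n E_{ij} ⊗ B_{ij} ∈ M(nd,ℂ) be the corresponding block matrix. Then T is separable if and only if T is positive semidefinite. -/
open Matrix Kronecker
open scoped ComplexOrder

/-- A matrix in `M(nd,ℂ)` is separable if it is a finite sum of Kronecker
products of positive semidefinite matrices. -/
def MatSeparable {n d : ℕ} (T : Matrix (Fin n × Fin d) (Fin n × Fin d) ℂ) : Prop :=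
  ∃ (s : ℕ) (P : Fin s → Matrix (Fin n) (Fin n) ℂ)
    (Q : Fin s → Matrix (Fin d) (Fin d) ℂ),
      (∀ i, (P i).PosSemidef) ∧ (∀ i, (Q i).PosSemidef) ∧
        T = ∑ i : Fin s, (P i) ⊗ₖ (Q i)

/-!
If `T` is positive semidefinite, it is Hermitian, so `B j i = (B i j)ᴴ`: the blocks form a
commuting family closed under adjoints. Their real and imaginary parts are then commuting
Hermitian matrices, which share an orthonormal eigenbasis `v`. Hence
`B i j = ∑ k, μ i j k • v k (v k)ᴴ` and `T = ∑ k, A k ⊗ v k (v k)ᴴ` with `A k = (μ i j k)ᵢⱼ`;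
finally `A k` is the compression of `T` to the vectors `x ⊗ v k`, so it is positive
semidefinite as well.
-/

open scoped ComplexStarModule

section InnerProductSpace

variable {𝕜 E ι : Type*} [RCLike 𝕜] [NormedAddCommGroup E] [InnerProductSpace 𝕜 E]
  [FiniteDimensional 𝕜 E] {n : ℕ}

theorem DirectSum.IsInternal.exists_orthonormalBasis_subordinate [DecidableEq ι]
    (hn : Module.finrank 𝕜 E = n) {V : ι → Submodule 𝕜 E} (hV : DirectSum.IsInternal V)
    (hV' : OrthogonalFamily 𝕜 (fun i => V i) fun i => (V i).subtypeₗᵢ) :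
    ∃ (b : OrthonormalBasis (Fin n) 𝕜 E) (f : Fin n → ι), ∀ k, b k ∈ V (f k) := by
  let _ := hV.submodule_iSupIndep.fintypeNeBotOfFiniteDimensional
  have hV₀ := DirectSum.isInternal_ne_bot_iff.mpr hV
  have hV₀' := hV'.comp (Subtype.val_injective (p := fun i => V i ≠ ⊥))
  exact ⟨hV₀.subordinateOrthonormalBasis hn hV₀',
    fun k => (hV₀.subordinateOrthonormalBasisIndex hn k hV₀').1,
    fun k => hV₀.subordinateOrthonormalBasis_subordinate hn k hV₀'⟩

open Module.End in
theorem LinearMap.IsSymmetric.exists_orthonormalBasis_apply_eq_smul_of_commute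
    (hn : Module.finrank 𝕜 E = n) {T : ι → E →ₗ[𝕜] E} (hT : ∀ i, (T i).IsSymmetric)
    (hC : Pairwise (Function.onFun Commute T)) :
    ∃ (b : OrthonormalBasis (Fin n) 𝕜 E) (μ : ι → Fin n → 𝕜),
      ∀ i k, T i (b k) = μ i k • b k := by
  classical
  obtain ⟨b, χ, hb⟩ := DirectSum.IsInternal.exists_orthonormalBasis_subordinate hn
    (directSum_isInternal_of_pairwise_commute hT hC) (orthogonalFamily_iInf_eigenspaces hT)
  exact ⟨b, fun i k => χ k i,
    fun i k => mem_eigenspace_iff.mp ((Submodule.mem_iInf _).mp (hb k) i)⟩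

end InnerProductSpace

section ComplexStarAlgebra

variable {A : Type*} [Ring A] [StarRing A] [Algebra ℂ A] [StarModule ℂ A] {a b : A}

theorem Commute.realPart_left (h : Commute a b) (h' : Commute (star a) b) :
    Commute (ℜ a : A) b := by
  rw [realPart_apply_coe]
  exact (h.add_left h').smul_left _

theorem Commute.imaginaryPart_left (h : Commute a b) (h' : Commute (star a) b) :
    Commute (ℑ a : A) b := by
  rw [imaginaryPart_apply_coe]
  exact ((h.sub_left h').smul_left _).smul_left _

end ComplexStarAlgebra

namespace Matrix

section Eigenbasis

variable {𝕜 ι κ : Type*} [RCLike 𝕜] [Fintype κ] [DecidableEq κ]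

theorem exists_orthonormalBasis_mulVec_eq_smul_of_isHermitian_of_commute
    {C : ι → Matrix κ κ 𝕜} (hC : ∀ i, (C i).IsHermitian) (hcomm : ∀ i j, Commute (C i) (C j)) :
    ∃ (b : OrthonormalBasis κ 𝕜 (EuclideanSpace 𝕜 κ)) (μ : ι → κ → 𝕜),
      ∀ i k, C i *ᵥ b k = μ i k • b k := by
  have hT : ∀ i, (toEuclideanLin (C i)).IsSymmetric := fun i =>
    isSymmetric_toEuclideanLin_iff.mpr (hC i)
  have hTC : Pairwise (Function.onFun Commute fun i => toEuclideanLin (C i)) := fun i j _ =>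
    (hcomm i j).map (toLpLinAlgEquiv 2)
  obtain ⟨b, μ, hb⟩ := LinearMap.IsSymmetric.exists_orthonormalBasis_apply_eq_smul_of_commute
    finrank_euclideanSpace hT hTC
  refine ⟨b.reindex (Fintype.equivFin κ).symm, fun i k => μ i (Fintype.equivFin κ k),
    fun i k => ?_⟩
  rw [OrthonormalBasis.reindex_apply, Equiv.symm_symm, ← toLin'_apply, ← ofLp_toLpLin 2 2, hb,
    WithLp.ofLp_smul]

theorem exists_orthonormalBasis_mulVec_eq_smul_of_commute {B : ι → Matrix κ κ ℂ}
    (hcomm : ∀ i j, Commute (B i) (B j)) (hstar : ∀ i j, Commute (B i) (star (B j))) :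
    ∃ (b : OrthonormalBasis κ ℂ (EuclideanSpace ℂ κ)) (μ : ι → κ → ℂ),
      ∀ i k, B i *ᵥ b k = μ i k • b k := by
  let C : ι ⊕ ι → Matrix κ κ ℂ := Sum.elim (fun i => ℜ (B i)) (fun i => ℑ (B i))
  have hC : ∀ x, (C x).IsHermitian := by
    rintro (i | i)
    exacts [(ℜ (B i)).2, (ℑ (B i)).2]
  have hBC : ∀ x j, Commute (B j) (C x) ∧ Commute (star (B j)) (C x) := by
    have h₁ : ∀ i j, Commute (B i) (B j) ∧ Commute (star (B i)) (B j) := fun i j =>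
      ⟨hcomm i j, (hstar j i).symm⟩
    have h₂ : ∀ i j, Commute (B i) (star (B j)) ∧ Commute (star (B i)) (star (B j)) :=
      fun i j => ⟨hstar i j, (hcomm i j).star_star⟩
    rintro (i | i) j
    · exact ⟨((h₁ i j).1.realPart_left (h₁ i j).2).symm,
        ((h₂ i j).1.realPart_left (h₂ i j).2).symm⟩
    · exact ⟨((h₁ i j).1.imaginaryPart_left (h₁ i j).2).symm,
        ((h₂ i j).1.imaginaryPart_left (h₂ i j).2).symm⟩
  have hCC : ∀ x y, Commute (C x) (C y) := by
    rintro (i | i) y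
    exacts [(hBC y i).1.realPart_left (hBC y i).2, (hBC y i).1.imaginaryPart_left (hBC y i).2]
  obtain ⟨b, μ, hb⟩ := exists_orthonormalBasis_mulVec_eq_smul_of_isHermitian_of_commute hC hCC
  refine ⟨b, fun i k => μ (.inl i) k + Complex.I * μ (.inr i) k, fun i k => ?_⟩
  have hre : (ℜ (B i) : Matrix κ κ ℂ) *ᵥ b k = μ (.inl i) k • b k := hb (.inl i) k
  have him : (ℑ (B i) : Matrix κ κ ℂ) *ᵥ b k = μ (.inr i) k • b k := hb (.inr i) k
  conv_lhs => rw [← realPart_add_I_smul_imaginaryPart (B i)]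
  rw [add_mulVec, smul_mulVec, hre, him, add_smul, mul_smul]

end Eigenbasis

end Matrix

section OrthonormalBasis

variable {𝕜 κ : Type*} [RCLike 𝕜] [Fintype κ] (b : OrthonormalBasis κ 𝕜 (EuclideanSpace 𝕜 κ))

theorem OrthonormalBasis.sum_vecMulVec_self_star [DecidableEq κ] :
    ∑ k, vecMulVec (b k) (star (b k)) = 1 := by
  rw [← mem_unitaryGroup_iff.mp
    ((EuclideanSpace.basisFun κ 𝕜).toMatrix_orthonormalBasis_mem_unitary b)]
  ext a c
  simp [mul_apply, Matrix.sum_apply, vecMulVec_apply, Module.Basis.toMatrix_apply]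

theorem OrthonormalBasis.star_dotProduct_mulVec_eq {M : Matrix κ κ 𝕜} {μ : 𝕜} {k : κ}
    (h : M *ᵥ b k = μ • b k) : star (b k) ⬝ᵥ M *ᵥ b k = μ := by
  rw [h, dotProduct_smul, dotProduct_comm, ← EuclideanSpace.inner_eq_star_dotProduct,
    b.inner_eq_one, smul_eq_mul, mul_one]

theorem Matrix.eq_sum_smul_vecMulVec_of_mulVec_eq_smul [DecidableEq κ] {M : Matrix κ κ 𝕜}
    {μ : κ → 𝕜} (h : ∀ k, M *ᵥ b k = μ k • b k) :
    M = ∑ k, μ k • vecMulVec (b k) (star (b k)) :=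
  calc M = M * ∑ k, vecMulVec (b k) (star (b k)) := by rw [b.sum_vecMulVec_self_star, mul_one]
    _ = ∑ k, μ k • vecMulVec (b k) (star (b k)) := by
      simp only [Matrix.mul_sum, mul_vecMulVec, h, smul_vecMulVec]

end OrthonormalBasis

namespace Matrix

section BlockMatrix

variable {R ι ι' κ κ' : Type*}

theorem sum_single_kronecker_eq_comp [Semiring R] [Fintype ι] [Fintype ι'] [DecidableEq ι]
    [DecidableEq ι'] (B : ι → ι' → Matrix κ κ' R) :
    ∑ i, ∑ j, single i j (1 : R) ⊗ₖ B i j = comp ι ι' κ κ' R (of B) := by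
  ext ⟨i, a⟩ ⟨j, c⟩
  simp [sum_apply, kroneckerMap_apply, single_apply, ite_and]

theorem comp_eq_sum_kronecker {σ : Type*} [CommSemiring R] [Fintype σ]
    (M : Matrix ι ι' (Matrix κ κ' R)) (A : σ → Matrix ι ι' R) (N : σ → Matrix κ κ' R)
    (h : ∀ i j, M i j = ∑ k, A k i j • N k) :
    comp ι ι' κ κ' R M = ∑ k, A k ⊗ₖ N k := by
  ext ⟨i, a⟩ ⟨j, c⟩
  simp [h, sum_apply, kroneckerMap_apply]

theorem IsHermitian.conjTranspose_apply_of_comp [Star R] {M : Matrix ι ι (Matrix κ κ R)}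
    (h : (comp ι ι κ κ R M).IsHermitian) (i j : ι) : (M i j)ᴴ = M j i := by
  ext a c
  exact congrFun (congrFun h (j, a)) (i, c)

theorem PosSemidef.map_star_dotProduct_mulVec {𝕜 : Type*} [RCLike 𝕜] [Fintype ι] [Fintype κ]
    [DecidableEq ι] {M : Matrix ι ι (Matrix κ κ 𝕜)} (h : (comp ι ι κ κ 𝕜 M).PosSemidef)
    (v : κ → 𝕜) : (M.map fun N => star v ⬝ᵥ N *ᵥ v).PosSemidef := by
  -- `V *ᵥ x = x ⊗ v`
  let V : Matrix (ι × κ) ι 𝕜 := of fun x i => if x.1 = i then v x.2 else 0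
  convert h.conjTranspose_mul_mul_same V using 1
  ext i j
  simp only [dotProduct, Pi.star_apply, RCLike.star_def, mulVec, Finset.mul_sum, map_apply,
    mul_apply, conjTranspose_apply, of_apply, apply_ite (starRingEnd 𝕜), map_zero, comp_apply,
    ite_mul, zero_mul, Fintype.sum_prod_type, Finset.sum_ite_irrel, Finset.sum_const_zero,
    Finset.sum_ite_eq', Finset.mem_univ, ↓reduceIte, mul_ite, Finset.sum_mul, mul_zero, V]
  rw [Finset.sum_comm]
  simp only [mul_assoc]

end BlockMatrix

end Matrix

theorem MatSeparable.posSemidef {n d : ℕ} {T : Matrix (Fin n × Fin d) (Fin n × Fin d) ℂ}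
    (h : MatSeparable T) : T.PosSemidef := by
  obtain ⟨s, P, Q, hP, hQ, rfl⟩ := h
  exact posSemidef_sum _ fun i _ => (hP i).kronecker (hQ i)

theorem separable_iff_posSemidef_of_normal_commuting_general {n d : ℕ}
    (B : Fin n → Fin n → Matrix (Fin d) (Fin d) ℂ)
    (hcomm : ∀ i j i' j' : Fin n, B i j * B i' j' = B i' j' * B i j) :
    MatSeparable (∑ i : Fin n, ∑ j : Fin n,
        (Matrix.single i j (1 : ℂ)) ⊗ₖ (B i j))
      ↔ (∑ i : Fin n, ∑ j : Fin n,
          (Matrix.single i j (1 : ℂ)) ⊗ₖ (B i j)).PosSemidef := by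
  rw [sum_single_kronecker_eq_comp]
  refine ⟨MatSeparable.posSemidef, fun hT => ?_⟩
  have hadj : ∀ i j, (B i j)ᴴ = B j i := hT.1.conjTranspose_apply_of_comp
  obtain ⟨b, μ, hb⟩ := exists_orthonormalBasis_mulVec_eq_smul_of_commute
    (B := fun x : Fin n × Fin n => B x.1 x.2) (fun x y => hcomm _ _ _ _)
    (fun x y => by rw [star_eq_conjTranspose, hadj]; exact hcomm _ _ _ _)
  refine ⟨d, fun k => of fun i j => μ (i, j) k, fun k => vecMulVec (b k) (star (b k)),
    fun k => ?_, fun k => posSemidef_vecMulVec_self_star _,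
    comp_eq_sum_kronecker _ _ _ fun i j => eq_sum_smul_vecMulVec_of_mulVec_eq_smul b (hb (i, j))⟩
  have hA : of (fun i j => μ (i, j) k) = (of B).map fun N => star (b k) ⬝ᵥ N *ᵥ b k := by
    ext i j
    exact (b.star_dotProduct_mulVec_eq (hb (i, j) k)).symm
  beta_reduce
  rw [hA]
  exact hT.map_star_dotProduct_mulVec (b k)

/-- for a block matrix with normal, mutually commuting blocks,
separability is equivalent to positive semidefiniteness. -/
theorem separable_iff_posSemidef_of_normal_commuting {n d : ℕ}
    (B : Fin n → Fin n → Matrix (Fin d) (Fin d) ℂ)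
    (hnormal : ∀ i j : Fin n, B i j * (B i j)ᴴ = (B i j)ᴴ * B i j)
    (hcomm : ∀ i j i' j' : Fin n, B i j * B i' j' = B i' j' * B i j) :
    MatSeparable (∑ i : Fin n, ∑ j : Fin n,
        (Matrix.single i j (1 : ℂ)) ⊗ₖ (B i j))
      ↔ (∑ i : Fin n, ∑ j : Fin n,
          (Matrix.single i j (1 : ℂ)) ⊗ₖ (B i j)).PosSemidef :=
  separable_iff_posSemidef_of_normal_commuting_general B hcomm
end

section
/- For β ∈ ℂ with |β| ≤ 1 and n ≥ 1, the Toeplitz matrix M(β) ∈ M(n,ℂ) with entries M(β)_{ij} = β^{j−i} for j ≥ i and M(β)_{ij} = (conj β)^{i−j} for i > j (indices i,j = 0,…,n−1) is positive semidefinite. -/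
/-!
The matrix factors as `Bᴴ D B`, where `B` is upper triangular with `B k j = β ^ (j - k)` for
`k ≤ j` and `D = diag(1, 1 - |β|², …, 1 - |β|²)`: for `i ≤ j` the `(i, j)` entry of `Bᴴ D B` is
`β ^ (j - i) * (|β|^(2i) + (1 - |β|²) * ∑_{l < i} |β|^(2l)) = β ^ (j - i)` by the geometric sum.
The diagonal `D` is positive semidefinite exactly when `|β| ≤ 1`, and congruence preserves
positive semidefiniteness.
-/

open Matrix Finset
open scoped ComplexOrder

theorem Fin.sum_univ_ite_val_le {M : Type*} [AddCommMonoid M] {n : ℕ} (f : ℕ → M) (i : Fin n) :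
    ∑ k : Fin n, (if (k : ℕ) ≤ i then f k else 0) = ∑ k ∈ range (i + 1), f k := by
  rw [Fin.sum_univ_eq_sum_range (fun k => if k ≤ i then f k else 0), ← sum_filter]
  congr 1
  ext k
  simp only [mem_filter, mem_range]
  omega

section CommRing

variable {R : Type*} [CommRing R]

def powToeplitzWeight (r : R) (k : ℕ) : R := if k = 0 then 1 else 1 - r

theorem sum_range_powToeplitzWeight_mul_pow (r : R) (m : ℕ) :
    ∑ k ∈ range (m + 1), powToeplitzWeight r k * r ^ (m - k) = 1 := by
  have hshift : ∑ k ∈ range m, powToeplitzWeight r (k + 1) * r ^ (m - (k + 1)) =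
      (1 - r) * ∑ k ∈ range m, r ^ k := by
    rw [← sum_range_reflect, mul_sum]
    refine sum_congr rfl fun k hk => ?_
    rw [mem_range] at hk
    rw [powToeplitzWeight, if_neg (Nat.succ_ne_zero _)]
    congr 2
    omega
  rw [sum_range_succ', hshift, mul_neg_geom_sum, powToeplitzWeight, if_pos rfl, one_mul,
    Nat.sub_zero, sub_add_cancel]

variable [StarRing R]

theorem IsSelfAdjoint.powToeplitzWeight {r : R} (hr : IsSelfAdjoint r) (k : ℕ) :
    IsSelfAdjoint (powToeplitzWeight r k) := by
  unfold _root_.powToeplitzWeight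
  split_ifs
  exacts [IsSelfAdjoint.one R, (IsSelfAdjoint.one R).sub hr]

def upperPowMatrix (n : ℕ) (β : R) : Matrix (Fin n) (Fin n) R :=
  of fun k j => if (k : ℕ) ≤ j then β ^ ((j : ℕ) - k) else 0

def powToeplitz (n : ℕ) (β : R) : Matrix (Fin n) (Fin n) R :=
  of fun i j => if (i : ℕ) ≤ j then β ^ ((j : ℕ) - i) else star β ^ ((i : ℕ) - j)

theorem conjTranspose_upperPowMatrix_mul_diagonal_mul_apply_of_le {n : ℕ} (β : R) {i j : Fin n}
    (hij : (i : ℕ) ≤ j) :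
    ((upperPowMatrix n β)ᴴ * diagonal (fun k : Fin n => powToeplitzWeight (star β * β) k) *
      upperPowMatrix n β) i j = β ^ ((j : ℕ) - i) := by
  have hterm : ∀ k : Fin n, star (upperPowMatrix n β k i) * powToeplitzWeight (star β * β) k *
      upperPowMatrix n β k j =
      if (k : ℕ) ≤ i then powToeplitzWeight (star β * β) k * (star β * β) ^ ((i : ℕ) - k) *
        β ^ ((j : ℕ) - i) else 0 := by
    intro k
    by_cases hki : (k : ℕ) ≤ i
    · have hsplit : (j : ℕ) - k = ((i : ℕ) - k) + ((j : ℕ) - i) := by omega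
      simp only [upperPowMatrix, of_apply, hki, hki.trans hij, if_true, star_pow, hsplit,
        pow_add, mul_pow]
      ring
    · simp only [upperPowMatrix, of_apply, hki, if_false, star_zero, zero_mul]
  rw [mul_apply, Fintype.sum_congr _ _ fun k => by rw [mul_diagonal, conjTranspose_apply, hterm k],
    Fin.sum_univ_ite_val_le
      (fun k => powToeplitzWeight (star β * β) k * (star β * β) ^ ((i : ℕ) - k) *
        β ^ ((j : ℕ) - i)),
    ← sum_mul, sum_range_powToeplitzWeight_mul_pow, one_mul]

theorem powToeplitz_eq_conjTranspose_mul_diagonal_mul (n : ℕ) (β : R) :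
    powToeplitz n β = (upperPowMatrix n β)ᴴ *
      diagonal (fun k : Fin n => powToeplitzWeight (star β * β) k) * upperPowMatrix n β := by
  -- Both sides are Hermitian, so the entries below the diagonal follow from those above it.
  have hherm : ((upperPowMatrix n β)ᴴ *
      diagonal (fun k : Fin n => powToeplitzWeight (star β * β) k) *
        upperPowMatrix n β).IsHermitian :=
    isHermitian_conjTranspose_mul_mul _ <| isHermitian_diagonal_of_self_adjoint _ <|
      funext fun k => ((IsSelfAdjoint.star_mul_self β).powToeplitzWeight k).star_eq
  ext i j
  rcases le_or_gt (i : ℕ) j with hij | hji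
  · rw [conjTranspose_upperPowMatrix_mul_diagonal_mul_apply_of_le β hij, powToeplitz, of_apply,
      if_pos hij]
  · rw [← hherm.apply, conjTranspose_upperPowMatrix_mul_diagonal_mul_apply_of_le β hji.le,
      powToeplitz, of_apply, if_neg hji.not_ge, star_pow]

end CommRing

theorem posSemidef_diagonal_powToeplitzWeight {𝕜 : Type*} [RCLike 𝕜] {n : ℕ} {β : 𝕜}
    (hβ : ‖β‖ ≤ 1) :
    (diagonal fun k : Fin n => powToeplitzWeight (star β * β) k).PosSemidef := by
  have hweight : (0 : 𝕜) ≤ 1 - star β * β := by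
    rw [RCLike.star_def, RCLike.conj_mul, ← RCLike.ofReal_pow, ← RCLike.ofReal_one,
      ← RCLike.ofReal_sub, RCLike.ofReal_nonneg, sub_nonneg]
    exact pow_le_one₀ (norm_nonneg β) hβ
  refine posSemidef_diagonal_iff.mpr fun k => ?_
  unfold powToeplitzWeight
  split_ifs
  exacts [zero_le_one, hweight]

theorem posSemidef_powToeplitz {𝕜 : Type*} [RCLike 𝕜] {n : ℕ} {β : 𝕜} (hβ : ‖β‖ ≤ 1) :
    (powToeplitz n β).PosSemidef := by
  rw [powToeplitz_eq_conjTranspose_mul_diagonal_mul]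
  exact (posSemidef_diagonal_powToeplitzWeight hβ).conjTranspose_mul_mul_same _

theorem posSemidef_toeplitz_power_matrix_general {n : ℕ} (β : ℂ)
    (hβ : ‖β‖ ≤ 1) :
    (Matrix.of fun i j : Fin n =>
        if (i : ℕ) ≤ (j : ℕ) then β ^ ((j : ℕ) - (i : ℕ))
        else (starRingEnd ℂ β) ^ ((i : ℕ) - (j : ℕ))).PosSemidef :=
  posSemidef_powToeplitz hβ

/-- for `|β| ≤ 1` the Toeplitz matrix `M(β)` with entries
`β^{j-i}` above the diagonal and `(conj β)^{i-j}` below is positive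
semidefinite. -/
theorem posSemidef_toeplitz_power_matrix {n : ℕ} (hn : 1 ≤ n) (β : ℂ)
    (hβ : ‖β‖ ≤ 1) :
    (Matrix.of fun i j : Fin n =>
        if (i : ℕ) ≤ (j : ℕ) then β ^ ((j : ℕ) - (i : ℕ))
        else (starRingEnd ℂ β) ^ ((i : ℕ) - (j : ℕ))).PosSemidef :=
  posSemidef_toeplitz_power_matrix_general β hβ
end
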